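/- Let p be an odd prime. For each c ∈ Z/(p), the multiplication (x₁,y₁,z₁)·(x₂,y₂,z₂) = (x₁+x₂+c·z₁y₂+y₁z₂+(c−1)·C(z₁,2)·z₂, y₁+y₂+z₁z₂, z₁+z₂), where C(n,2) = n(n−1)/2, defines a left brace on (Z/(p))³ (with componentwise addition) whose socle has order p, and for distinct values c ≠ c' in Z/(p) the corresponding left braces are not isomorphic. -/
import Mathlib


/-- A left brace: an abelian group `(B,+)` and a group `(B,·)` such that
`a·(b+c)+a = a·b+a·c` for all `a b c`. -/
class LeftBrace (B : Type*) extends AddCommGroup B, Group B where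
  left_brace : ∀ a b c : B, a * (b + c) + a = a * b + a * c

/-- `C(z,2) = z(z−1)/2` computed in `Z/(p)` (for odd `p`). -/
def choose2ZMod (p : ℕ) (z : ZMod p) : ZMod p := z * (z - 1) * (2 : ZMod p)⁻¹

/-- The multiplication `(x₁,y₁,z₁)·(x₂,y₂,z₂) =
(x₁+x₂+c·z₁y₂+y₁z₂+(c−1)·C(z₁,2)·z₂, y₁+y₂+z₁z₂, z₁+z₂)` on `(Z/(p))³`. -/
def mulSocP (p : ℕ) (c : ZMod p) (a b : ZMod p × ZMod p × ZMod p) :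
    ZMod p × ZMod p × ZMod p :=
  (a.1 + b.1 + c * a.2.2 * b.2.1 + a.2.1 * b.2.2 + (c - 1) * choose2ZMod p a.2.2 * b.2.2,
   a.2.1 + b.2.1 + a.2.2 * b.2.2,
   a.2.2 + b.2.2)


private lemma zmod_two_ne_zero (p : ℕ) (hp : p.Prime) (hodd : p ≠ 2) : (2 : ZMod p) ≠ 0 := by
  haveI : Fact p.Prime := ⟨hp⟩
  have h : ((2:ℕ) : ZMod p) ≠ 0 := by
    rw [Ne, ZMod.natCast_eq_zero_iff]
    intro h
    exact hodd ((Nat.prime_dvd_prime_iff_eq hp Nat.prime_two).mp h)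
  simpa using h

private lemma mulSocP_assoc (p : ℕ) [Fact p.Prime] (h2 : (2:ZMod p) ≠ 0) (c : ZMod p)
    (a b d : ZMod p × ZMod p × ZMod p) :
    mulSocP p c (mulSocP p c a b) d = mulSocP p c a (mulSocP p c b d) := by
  simp only [mulSocP, choose2ZMod, Prod.mk.injEq]
  refine ⟨?_, by ring, by ring⟩
  field_simp
  ring

private lemma mulSocP_id (p : ℕ) (c : ZMod p) (a : ZMod p × ZMod p × ZMod p) :
    mulSocP p c 0 a = a ∧ mulSocP p c a 0 = a := by
  constructor <;> simp [mulSocP, choose2ZMod]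

private lemma mulSocP_inv (p : ℕ) [Fact p.Prime] (h2 : (2:ZMod p) ≠ 0) (c : ZMod p)
    (a : ZMod p × ZMod p × ZMod p) :
    ∃ b, mulSocP p c a b = 0 ∧ mulSocP p c b a = 0 := by
  refine ⟨(-a.1 - c*a.2.2*(a.2.2^2 - a.2.1) + a.2.1*a.2.2 + (c-1)*choose2ZMod p a.2.2 * a.2.2,
    a.2.2^2 - a.2.1, -a.2.2), ?_, ?_⟩ <;>
  · simp only [mulSocP, choose2ZMod, Prod.mk.injEq, Prod.mk_eq_zero]
    refine ⟨?_, by ring, by ring⟩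
    field_simp
    ring

private lemma mulSocP_brace (p : ℕ) (c : ZMod p) (a b d : ZMod p × ZMod p × ZMod p) :
    mulSocP p c a (b + d) + a = mulSocP p c a b + mulSocP p c a d := by
  simp only [mulSocP, choose2ZMod, Prod.ext_iff, Prod.fst_add, Prod.snd_add]
  refine ⟨by ring, by ring, by ring⟩

private lemma mulSocP_socle_card (p : ℕ) [Fact p.Prime] (c : ZMod p) :
    Nat.card ↥{a : ZMod p × ZMod p × ZMod p | ∀ b, mulSocP p c a b - a = b} = p := by
  have hset : {a : ZMod p × ZMod p × ZMod p | ∀ b, mulSocP p c a b - a = b}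
      = {a | a.2.1 = 0 ∧ a.2.2 = 0} := by
    ext a
    simp only [Set.mem_setOf_eq]
    constructor
    · intro h
      have h1 := h (0, 0, 1)
      simp only [mulSocP, choose2ZMod, Prod.ext_iff, Prod.fst_sub, Prod.snd_sub,
        Prod.mk.injEq] at h1
      obtain ⟨hx, hy, -⟩ := h1
      have hz : a.2.2 = 0 := by linear_combination hy
      refine ⟨?_, hz⟩
      rw [hz] at hx
      linear_combination hx
    · rintro ⟨hy, hz⟩ b
      obtain ⟨x, y, z⟩ := a
      simp only at hy hz
      subst hy; subst hz
      simp [mulSocP, choose2ZMod, Prod.ext_iff]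
  rw [hset]
  have e : {a : ZMod p × ZMod p × ZMod p | a.2.1 = 0 ∧ a.2.2 = 0} ≃ ZMod p :=
    { toFun := fun a => a.1.1
      invFun := fun x => ⟨(x, 0, 0), by simp⟩
      left_inv := by
        rintro ⟨⟨x, y, z⟩, hy, hz⟩
        simp only at hy hz
        subst hy; subst hz
        rfl
      right_inv := fun x => rfl }
  rw [Nat.card_congr e, Nat.card_zmod]

private lemma mulSocP_noniso (p : ℕ) [Fact p.Prime] (c c' : ZMod p) (hne : c ≠ c')
    (f : (ZMod p × ZMod p × ZMod p) ≃+ ZMod p × ZMod p × ZMod p)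
    (hf : ∀ a b, f (mulSocP p c a b) = mulSocP p c' (f a) (f b)) : False := by
  have hsoc : ∀ (x : ZMod p) (b : ZMod p × ZMod p × ZMod p),
      mulSocP p c (x, 0, 0) b = (x, 0, 0) + b := by
    intro x b
    simp [mulSocP, choose2ZMod, Prod.ext_iff]
  have hF : ∀ x : ZMod p, f (x, 0, 0) = ((f (x, 0, 0)).1, 0, 0) := by
    intro x
    have key := hf (x, 0, 0) (f.symm (0, 0, 1))
    rw [hsoc, map_add, f.apply_symm_apply] at key
    set v := f (x, 0, 0) with hv
    have key' : v + (0, 0, 1) = mulSocP p c' v (0, 0, 1) := key.symm ▸ rfl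
    simp only [mulSocP, choose2ZMod, Prod.ext_iff, Prod.fst_add, Prod.snd_add,
      Prod.mk.injEq] at key'
    obtain ⟨h1, h2, -⟩ := key'
    have hz : v.2.2 = 0 := by linear_combination -h2
    have hy : v.2.1 = 0 := by rw [hz] at h1; linear_combination -h1
    simp [Prod.ext_iff, hy, hz]
  obtain ⟨s, hs⟩ : ∃ s, f (1, 0, 0) = (s, 0, 0) := ⟨_, hF 1⟩
  have hFx : ∀ x : ZMod p, f (x, 0, 0) = (x * s, 0, 0) := by
    intro x
    have hx : ((x.val : ℕ) : ZMod p) = x := by simp [ZMod.natCast_val, ZMod.cast_id]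
    have h1 : (x, (0:ZMod p), (0:ZMod p)) = x.val • ((1:ZMod p), (0:ZMod p), (0:ZMod p)) := by
      simp [Prod.ext_iff, nsmul_eq_mul, hx]
    rw [h1, map_nsmul, hs]
    simp [Prod.ext_iff, nsmul_eq_mul, hx, mul_comm]
  have hs0 : s ≠ 0 := by
    intro h
    have h1 : f (1, 0, 0) = f 0 := by rw [hs, map_zero, h]; simp [Prod.ext_iff]
    have := f.injective h1
    simp [Prod.ext_iff] at this
  obtain ⟨g2, hg2⟩ : ∃ v, f (0, 1, 0) = v := ⟨_, rfl⟩
  obtain ⟨γ, t, δ⟩ := g2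
  obtain ⟨g3, hg3⟩ : ∃ v, f (0, 0, 1) = v := ⟨_, rfl⟩
  obtain ⟨α, β, u⟩ := g3
  have hδ : δ = 0 := by
    have key := hf (0, 1, 0) (0, 1, 0)
    have hm : mulSocP p c ((0:ZMod p), (1:ZMod p), (0:ZMod p)) (0, 1, 0)
        = (0, 1, 0) + (0, 1, 0) := by
      simp [mulSocP, choose2ZMod, Prod.ext_iff]
    rw [hm, map_add, hg2] at key
    simp only [mulSocP, choose2ZMod, Prod.mk.injEq, Prod.mk_add_mk] at key
    obtain ⟨-, k2, -⟩ := key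
    have : δ * δ = 0 := by linear_combination -k2
    exact mul_self_eq_zero.mp this
  subst hδ
  have hC : s = t * u := by
    have key := hf (0, 1, 0) (0, 0, 1)
    have hm : mulSocP p c ((0:ZMod p), (1:ZMod p), (0:ZMod p)) (0, 0, 1)
        = (1, 0, 0) + ((0, 1, 0) + (0, 0, 1)) := by
      simp [mulSocP, choose2ZMod, Prod.ext_iff]
    rw [hm, map_add, map_add, hFx 1, hg2, hg3] at key
    simp only [mulSocP, choose2ZMod, Prod.mk.injEq, Prod.mk_add_mk] at key
    obtain ⟨k1, -, -⟩ := key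
    linear_combination k1
  have hA : c * s = c' * u * t := by
    have key := hf (0, 0, 1) (0, 1, 0)
    have hm : mulSocP p c ((0:ZMod p), (0:ZMod p), (1:ZMod p)) (0, 1, 0)
        = (c, 0, 0) + ((0, 1, 0) + (0, 0, 1)) := by
      simp [mulSocP, choose2ZMod, Prod.ext_iff]
    rw [hm, map_add, map_add, hFx c, hg2, hg3] at key
    simp only [mulSocP, choose2ZMod, Prod.mk.injEq, Prod.mk_add_mk] at key
    obtain ⟨k1, -, -⟩ := key
    linear_combination k1
  apply hne
  have h0 : (c - c') * s = 0 := by rw [hC] at hA ⊢; linear_combination hA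
  rcases mul_eq_zero.mp h0 with h | h
  · exact sub_eq_zero.mp h
  · exact absurd h hs0

/-- For an odd prime `p` and each `c ∈ Z/(p)`, `mulSocP p c` defines a left brace on
`(Z/(p))³` whose socle has order `p`, and distinct values of `c` give non-isomorphic
left braces. -/
theorem braces_p_cubed_elementary_socle_p_family (p : ℕ) (hp : p.Prime) (hodd : p ≠ 2) :
    (∀ c : ZMod p,
      (∀ a b d : ZMod p × ZMod p × ZMod p,
        mulSocP p c (mulSocP p c a b) d = mulSocP p c a (mulSocP p c b d)) ∧
      (∀ a : ZMod p × ZMod p × ZMod p, mulSocP p c 0 a = a ∧ mulSocP p c a 0 = a) ∧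
      (∀ a : ZMod p × ZMod p × ZMod p, ∃ b, mulSocP p c a b = 0 ∧ mulSocP p c b a = 0) ∧
      (∀ a b d : ZMod p × ZMod p × ZMod p,
        mulSocP p c a (b + d) + a = mulSocP p c a b + mulSocP p c a d) ∧
      Nat.card ↥{a : ZMod p × ZMod p × ZMod p | ∀ b, mulSocP p c a b - a = b} = p) ∧
    (∀ c c' : ZMod p, c ≠ c' →
      ¬∃ f : (ZMod p × ZMod p × ZMod p) ≃+ ZMod p × ZMod p × ZMod p,
        ∀ a b, f (mulSocP p c a b) = mulSocP p c' (f a) (f b)) := by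
  haveI : Fact p.Prime := ⟨hp⟩
  have h2 : (2 : ZMod p) ≠ 0 := zmod_two_ne_zero p hp hodd
  refine ⟨fun c => ⟨mulSocP_assoc p h2 c, mulSocP_id p c, mulSocP_inv p h2 c,
    mulSocP_brace p c, mulSocP_socle_card p c⟩, fun c c' hne h => ?_⟩
  obtain ⟨f, hf⟩ := h
  exact mulSocP_noniso p c c' hne f hf
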